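/- arXiv:hep-th/0002003 — 4 statements merged into one kernel-verified Lean document; each statement's English description precedes it below -/
import Mathlib

section
/- Let g : ℝ → ℂ be smooth and f : ℂ → ℂ be holomorphic (entire). Then the Bell matrix of the composite function f∘g factors as the product of the Bell matrices of g and of f: for all integers j ≥ k ≥ 0 and all x ∈ ℝ, B_{j,k}[f∘g](x) = Σ_{n=k}^{j} B_{j,n}[g](x) · B_{n,k}[f](g(x)), where B_{n,k}[f](w) is the Bell matrix entry built from the complex derivatives f^{(1)}(w),…,f^{(n−k+1)}(w). -/
open PowerSeries Finset

/-- The Bell matrix entry `B_{n,j}[d] = Σ n!/(k₁!⋯k_n!) ∏_{m=1}^n (d_m/m!)^{k_m}`,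
the sum over tuples `(k₁,…,k_n)` of nonnegative integers with `k₁+2k₂+⋯+n·k_n = n`
and `k₁+⋯+k_n = j`.  Here `d : ℕ → ℂ` supplies the derivative values `d m`.
With this definition `B_{n,0} = δ_{n,0}` and `B_{n,j} = 0` for `n < j` automatically. -/
noncomputable def bellB (n j : ℕ) (d : ℕ → ℂ) : ℂ :=
  ∑ k ∈ (Fintype.piFinset fun _ : Fin n => Finset.range (n + 1)).filter
      (fun k => (∑ m : Fin n, (m.1 + 1) * k m) = n ∧ (∑ m : Fin n, k m) = j),
    (n.factorial : ℂ) *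
      ∏ m : Fin n, ((d (m.1 + 1) / (m.1 + 1).factorial) ^ (k m) / (k m).factorial)

noncomputable def FdB.Sser (d : ℕ → ℂ) : PowerSeries ℂ :=
  PowerSeries.mk fun m => if m = 0 then 0 else d m / m.factorial

namespace FdB

lemma coeff_Sser (d : ℕ → ℂ) (m : ℕ) :
    (PowerSeries.coeff m) (Sser d) = if m = 0 then 0 else d m / m.factorial :=
  PowerSeries.coeff_mk _ _

lemma constantCoeff_Sser (d : ℕ → ℂ) : PowerSeries.constantCoeff (Sser d) = 0 := by
  rw [← PowerSeries.coeff_zero_eq_constantCoeff_apply, coeff_Sser]; simp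

lemma pow_coeff_zero {A : PowerSeries ℂ} (h : PowerSeries.constantCoeff A = 0)
    {m n : ℕ} (h2 : m < n) : PowerSeries.coeff m (A ^ n) = 0 := by
  have hd : (PowerSeries.X : ℂ⟦X⟧) ^ n ∣ A ^ n :=
    pow_dvd_pow_of_dvd (PowerSeries.X_dvd_iff.2 h) n
  exact (PowerSeries.X_pow_dvd_iff.1 hd) m h2

lemma coeff_mul_congr {A A' B B' : PowerSeries ℂ} {m : ℕ}
    (hA : ∀ i ≤ m, PowerSeries.coeff i A = PowerSeries.coeff i A')
    (hB : ∀ i ≤ m, PowerSeries.coeff i B = PowerSeries.coeff i B') :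
    ∀ i ≤ m, PowerSeries.coeff i (A * B) = PowerSeries.coeff i (A' * B') := by
  intro i hi
  rw [PowerSeries.coeff_mul, PowerSeries.coeff_mul]
  refine Finset.sum_congr rfl fun p hp => ?_
  have hm := Finset.HasAntidiagonal.mem_antidiagonal.1 hp
  rw [hA p.1 (by omega), hB p.2 (by omega)]

lemma coeff_pow_congr {A A' : PowerSeries ℂ} {m : ℕ}
    (hA : ∀ i ≤ m, PowerSeries.coeff i A = PowerSeries.coeff i A') (k : ℕ) :
    ∀ i ≤ m, PowerSeries.coeff i (A ^ k) = PowerSeries.coeff i (A' ^ k) := by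
  induction k with
  | zero => intro i hi; simp
  | succ k ih =>
      intro i hi
      rw [pow_succ, pow_succ]
      exact coeff_mul_congr ih hA i hi

lemma sum_Icc_one {M : Type*} [AddCommMonoid M] (n : ℕ) (F : ℕ → M) :
    ∑ m ∈ Icc 1 n, F m = ∑ m : Fin n, F (m.1 + 1) := by
  rw [← Finset.Ico_add_one_right_eq_Icc, Finset.sum_Ico_eq_sum_range,
    Fin.sum_univ_eq_sum_range (fun i => F (i + 1)) n]
  simp [add_comm]

lemma prod_Icc_one {M : Type*} [CommMonoid M] (n : ℕ) (F : ℕ → M) :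
    ∏ m ∈ Icc 1 n, F m = ∏ m : Fin n, F (m.1 + 1) := by
  rw [← Finset.Ico_add_one_right_eq_Icc, Finset.prod_Ico_eq_prod_range,
    Fin.prod_univ_eq_prod_range (fun i => F (i + 1)) n]
  simp [add_comm]

theorem bellB_eq (n j : ℕ) (d : ℕ → ℂ) :
    bellB n j d = (n.factorial : ℂ) / j.factorial * PowerSeries.coeff n (Sser d ^ j) := by
  classical
  set a : ℕ → ℂ := fun m => d m / m.factorial with ha
  set T : PowerSeries ℂ := ∑ m ∈ Icc 1 n, PowerSeries.C (a m) * PowerSeries.X ^ m with hT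
  -- coefficients of T agree with those of Sser d up to degree n
  have hcoe : ∀ i ≤ n, PowerSeries.coeff i (Sser d) = PowerSeries.coeff i T := by
    intro i hi
    rw [hT, map_sum]
    simp only [PowerSeries.coeff_C_mul, PowerSeries.coeff_X_pow, mul_ite, mul_one, mul_zero]
    rw [Finset.sum_ite_eq (Icc 1 n) i a]
    rw [Sser, PowerSeries.coeff_mk]
    by_cases h0 : i = 0
    · simp [h0]
    · rw [if_neg h0, if_pos (by simp; omega)]
  have h1 : PowerSeries.coeff n (Sser d ^ j) = PowerSeries.coeff n (T ^ j) :=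
    coeff_pow_congr hcoe j n le_rfl
  -- multinomial expansion
  have h2 : PowerSeries.coeff n (T ^ j) =
      ∑ c ∈ Finset.piAntidiag (Icc 1 n) j,
        if (∑ m ∈ Icc 1 n, m * c m) = n then
          (Nat.multinomial (Icc 1 n) c : ℂ) * ∏ m ∈ Icc 1 n, a m ^ c m
        else 0 := by
    rw [hT, Finset.sum_pow_eq_sum_piAntidiag, map_sum]
    refine Finset.sum_congr rfl fun c hc => ?_
    have : ∀ m ∈ Icc 1 n, (PowerSeries.C (a m) * PowerSeries.X ^ m) ^ c m
        = PowerSeries.C (a m ^ c m) * PowerSeries.X ^ (m * c m) := by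
      intro m _; rw [mul_pow, ← map_pow, ← pow_mul]
    rw [Finset.prod_congr rfl this, Finset.prod_mul_distrib, ← map_prod,
      Finset.prod_pow_eq_pow_sum]
    rw [show ((Nat.multinomial (Icc 1 n) c : ℂ⟦X⟧)) = PowerSeries.C
      ((Nat.multinomial (Icc 1 n) c : ℂ)) from by push_cast [map_natCast]; rfl]
    rw [← mul_assoc, ← map_mul, PowerSeries.coeff_C_mul, PowerSeries.coeff_X_pow]
    by_cases h : (∑ m ∈ Icc 1 n, m * c m) = n
    · rw [if_pos h, if_pos h.symm, mul_one]
    · rw [if_neg h, if_neg (fun hh => h hh.symm), mul_zero]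
  rw [h1, h2, Finset.mul_sum]
  simp only [mul_ite, mul_zero]
  rw [← Finset.sum_filter, bellB]
  refine Finset.sum_nbij'
    (fun k => fun m => if h : 1 ≤ m ∧ m ≤ n then k ⟨m - 1, by omega⟩ else 0)
    (fun c => fun m : Fin n => c (m.1 + 1)) ?_ ?_ ?_ ?_ ?_
  · intro k hk
    simp only [Finset.mem_filter, Fintype.mem_piFinset, Finset.mem_range] at hk
    obtain ⟨hmem, hsum1, hsum2⟩ := hk
    have heval : ∀ m : Fin n,
        (if h : 1 ≤ m.1 + 1 ∧ m.1 + 1 ≤ n then k ⟨m.1 + 1 - 1, by omega⟩ else 0) = k m :=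
      fun m => dif_pos ⟨by omega, by omega⟩
    refine Finset.mem_filter.2 ⟨Finset.mem_piAntidiag.2 ⟨?_, ?_⟩, ?_⟩
    · exact (sum_Icc_one n _).trans ((Finset.sum_congr rfl fun m _ => heval m).trans hsum2)
    · intro m hm
      by_contra hmem'
      rw [dif_neg (fun hh => hmem' (Finset.mem_Icc.2 hh))] at hm
      exact hm rfl
    · exact (sum_Icc_one n _).trans
        ((Finset.sum_congr rfl fun m _ => by dsimp only; rw [heval m]).trans hsum1)
  · intro c hc
    simp only [Finset.mem_filter, Finset.mem_piAntidiag] at hc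
    obtain ⟨⟨hsum2, hsupp⟩, hsum1⟩ := hc
    have hle : ∀ m : Fin n, c (m.1 + 1) ≤ n := by
      intro m
      have h1' : (m.1 + 1) * c (m.1 + 1) ≤ ∑ m' ∈ Icc 1 n, m' * c m' := by
        refine Finset.single_le_sum (f := fun m' => m' * c m') (fun _ _ => Nat.zero_le _) ?_
        exact Finset.mem_Icc.2 ⟨Nat.succ_le_succ (Nat.zero_le _), m.isLt⟩
      have h1 : (m.1 + 1) * c (m.1 + 1) ≤ n := h1'.trans (le_of_eq hsum1)
      have h2 : c (m.1 + 1) ≤ (m.1 + 1) * c (m.1 + 1) :=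
        Nat.le_mul_of_pos_left (c (m.1 + 1)) (Nat.succ_pos m.1)
      omega
    refine Finset.mem_filter.2 ⟨?_, ?_, ?_⟩
    · rw [Fintype.mem_piFinset]
      intro m
      rw [Finset.mem_range]
      have := hle m
      omega
    · exact ((sum_Icc_one n (fun m => m * c m)).symm).trans hsum1
    · exact ((sum_Icc_one n c).symm).trans hsum2
  · intro k hk
    funext m
    dsimp only
    exact dif_pos ⟨by omega, by omega⟩
  · intro c hc
    simp only [Finset.mem_filter, Finset.mem_piAntidiag] at hc
    obtain ⟨⟨hsum2, hsupp⟩, hsum1⟩ := hc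
    funext m
    dsimp only
    by_cases h : 1 ≤ m ∧ m ≤ n
    · rw [dif_pos h]
      congr 1
      omega
    · rw [dif_neg h]
      by_contra hne
      have := hsupp m (fun hh => hne hh.symm)
      rw [Finset.mem_Icc] at this
      exact h this
  · intro k hk
    simp only [Finset.mem_filter, Fintype.mem_piFinset, Finset.mem_range] at hk
    obtain ⟨hmem, hsum1, hsum2⟩ := hk
    have heval : ∀ m : Fin n,
        (if h : 1 ≤ m.1 + 1 ∧ m.1 + 1 ≤ n then k ⟨m.1 + 1 - 1, by omega⟩ else 0) = k m :=
      fun m => dif_pos ⟨by omega, by omega⟩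
    have hmult : (∏ m : Fin n, ((k m).factorial : ℂ)) *
        ((Nat.multinomial (Icc 1 n)
          (fun m => if h : 1 ≤ m ∧ m ≤ n then k ⟨m - 1, by omega⟩ else 0) : ℕ) : ℂ)
        = (j.factorial : ℂ) := by
      have hspec := Nat.multinomial_spec (Icc 1 n)
        (fun m => if h : 1 ≤ m ∧ m ≤ n then k ⟨m - 1, by omega⟩ else 0)
      have hprod : (∏ m ∈ Icc 1 n,
          (if h : 1 ≤ m ∧ m ≤ n then k ⟨m - 1, by omega⟩ else 0).factorial)
          = ∏ m : Fin n, (k m).factorial := by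
        rw [prod_Icc_one]
        exact Finset.prod_congr rfl fun m _ => by rw [heval]
      have hsum : (∑ m ∈ Icc 1 n, (if h : 1 ≤ m ∧ m ≤ n then k ⟨m - 1, by omega⟩ else 0)) = j := by
        rw [sum_Icc_one]
        exact (Finset.sum_congr rfl fun m _ => heval m).trans hsum2
      rw [hprod, hsum] at hspec
      have := congrArg (Nat.cast : ℕ → ℂ) hspec
      push_cast at this ⊢
      exact this
    have hprodA : (∏ m ∈ Icc 1 n,
        a m ^ (if h : 1 ≤ m ∧ m ≤ n then k ⟨m - 1, by omega⟩ else 0))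
        = ∏ m : Fin n, a (m.1 + 1) ^ (k m) := by
      rw [prod_Icc_one]
      exact Finset.prod_congr rfl fun m _ => by rw [heval]
    have hP : (∏ m : Fin n, ((k m).factorial : ℂ)) ≠ 0 :=
      Finset.prod_ne_zero_iff.2 fun i _ => Nat.cast_ne_zero.2 (Nat.factorial_ne_zero _)
    have hjne : (j.factorial : ℂ) ≠ 0 := Nat.cast_ne_zero.2 (Nat.factorial_ne_zero _)
    have hprodsplit : (∏ m : Fin n,
        ((d (m.1 + 1) / (m.1 + 1).factorial) ^ (k m) / (k m).factorial))
        = (∏ m : Fin n, a (m.1 + 1) ^ (k m)) / (∏ m : Fin n, ((k m).factorial : ℂ)) := by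
      rw [Finset.prod_div_distrib]
    rw [hprodsplit, hprodA]
    field_simp
    linear_combination -((n.factorial : ℂ) * ∏ x : Fin n, a (x.1 + 1) ^ k x) * hmult

noncomputable def Sd (g : ℝ → ℂ) (x : ℝ) : PowerSeries ℂ :=
  PowerSeries.mk fun m => if m = 0 then 0 else iteratedDeriv (m + 1) g x / m.factorial

lemma hasDerivAt_coeff_Sg {g : ℝ → ℂ} (hg : ContDiff ℝ (⊤ : ℕ∞) g) (m : ℕ) (x : ℝ) :
    HasDerivAt (fun x => PowerSeries.coeff m (Sser (fun i => iteratedDeriv i g x)))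
      (PowerSeries.coeff m (Sd g x)) x := by
  simp only [Sser, Sd, PowerSeries.coeff_mk]
  by_cases h : m = 0
  · simp only [if_pos h]
    exact hasDerivAt_const x 0
  · simp only [if_neg h]
    have hdiff : Differentiable ℝ (iteratedDeriv m g) :=
      hg.differentiable_iteratedDeriv m (by exact_mod_cast lt_top_iff_ne_top.2 (by simp))
    have hd : HasDerivAt (iteratedDeriv m g) (iteratedDeriv (m + 1) g x) x := by
      rw [iteratedDeriv_succ]
      exact (hdiff x).hasDerivAt
    exact hd.div_const _

lemma hasDerivAt_coeff_mul (F G Fd Gd : ℝ → PowerSeries ℂ) (x : ℝ)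
    (hF : ∀ m, HasDerivAt (fun x => PowerSeries.coeff m (F x))
      (PowerSeries.coeff m (Fd x)) x)
    (hG : ∀ m, HasDerivAt (fun x => PowerSeries.coeff m (G x))
      (PowerSeries.coeff m (Gd x)) x) (j : ℕ) :
    HasDerivAt (fun x => PowerSeries.coeff j (F x * G x))
      (PowerSeries.coeff j (Fd x * G x + F x * Gd x)) x := by
  have e : (fun x => PowerSeries.coeff j (F x * G x)) =
      fun x => ∑ p ∈ Finset.HasAntidiagonal.antidiagonal j,
        PowerSeries.coeff p.1 (F x) * PowerSeries.coeff p.2 (G x) :=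
    funext fun y => PowerSeries.coeff_mul j (F y) (G y)
  rw [e, map_add, PowerSeries.coeff_mul, PowerSeries.coeff_mul, ← Finset.sum_add_distrib]
  exact HasDerivAt.fun_sum fun p _ => (hF p.1).mul (hG p.2)

lemma hasDerivAt_coeff_pow (F Fd : ℝ → PowerSeries ℂ) (x : ℝ)
    (hF : ∀ m, HasDerivAt (fun x => PowerSeries.coeff m (F x))
      (PowerSeries.coeff m (Fd x)) x) (n : ℕ) :
    ∀ j, HasDerivAt (fun x => PowerSeries.coeff j (F x ^ (n + 1)))
      (PowerSeries.coeff j ((n + 1 : ℕ) • (F x ^ n * Fd x))) x := by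
  induction n with
  | zero =>
      intro j
      simp only [zero_add, pow_one, pow_zero, one_smul, one_mul]
      exact hF j
  | succ n ih =>
      intro j
      have h2 := hasDerivAt_coeff_mul (fun x => F x ^ (n + 1)) F
        (fun x => (n + 1 : ℕ) • (F x ^ n * Fd x)) Fd x ih hF j
      have e1 : (fun x => PowerSeries.coeff j (F x ^ (n + 1) * F x)) =
          fun x => PowerSeries.coeff j (F x ^ (n + 2)) :=
        funext fun y => by rw [← pow_succ]
      rw [e1] at h2
      convert h2 using 1
      refine congrArg _ ?_
      simp only [nsmul_eq_mul]
      push_cast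
      ring

lemma bellB_zero_right (j : ℕ) (d : ℕ → ℂ) : bellB j 0 d = if j = 0 then 1 else 0 := by
  rw [bellB_eq]
  by_cases h : j = 0 <;> simp [h, PowerSeries.coeff_one]

lemma bellB_vanish {j n : ℕ} (h : j < n) (d : ℕ → ℂ) : bellB j n d = 0 := by
  rw [bellB_eq, pow_coeff_zero (constantCoeff_Sser d) h, mul_zero]

lemma derivative_Sg (g : ℝ → ℂ) (x : ℝ) :
    d⁄dX ℂ (Sser (fun m => iteratedDeriv m g x)) = PowerSeries.C (deriv g x) + Sd g x := by
  ext n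
  rw [PowerSeries.coeff_derivative, map_add, PowerSeries.coeff_C]
  cases n with
  | zero =>
      simp [Sser, Sd, PowerSeries.coeff_mk, iteratedDeriv_one]
  | succ m =>
      simp only [Sser, Sd, PowerSeries.coeff_mk, Nat.succ_ne_zero, if_neg, if_false,
        Nat.add_eq_zero]
      rw [zero_add]
      have h2 : ((m + 1).factorial : ℂ) ≠ 0 := Nat.cast_ne_zero.2 (Nat.factorial_ne_zero _)
      have h3 : ((m + 2 : ℕ) : ℂ) ≠ 0 := by exact_mod_cast (by omega : (m + 2) ≠ 0)
      rw [show m + 1 + 1 = m + 2 from rfl, show (m+2).factorial = (m+2) * (m+1).factorial from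
        Nat.factorial_succ (m+1)]
      push_cast
      rw [div_mul_eq_mul_div, div_eq_div_iff (by
        exact mul_ne_zero (by push_cast at h3 ⊢; exact h3) h2) h2]
      ring

lemma bellB_hasDerivAt {g : ℝ → ℂ} (hg : ContDiff ℝ (⊤ : ℕ∞) g) (j n : ℕ) (x : ℝ) :
    HasDerivAt (fun x => bellB j n (fun m => iteratedDeriv m g x))
      (bellB (j + 1) n (fun m => iteratedDeriv m g x)
        - deriv g x * (if n = 0 then 0
            else bellB j (n - 1) (fun m => iteratedDeriv m g x))) x := by
  cases n with
  | zero =>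
      simp only [if_pos rfl, if_true, eq_self_iff_true, mul_zero, sub_zero]
      have hconst : (fun x => bellB j 0 (fun m => iteratedDeriv m g x)) =
          fun _ => (if j = 0 then (1 : ℂ) else 0) := funext fun y => bellB_zero_right _ _
      rw [hconst, bellB_zero_right, if_neg (Nat.succ_ne_zero j)]
      exact hasDerivAt_const x (if j = 0 then (1 : ℂ) else 0)
  | succ n' =>
      have hfun : (fun x => bellB j (n' + 1) (fun m => iteratedDeriv m g x)) =
          fun x => (j.factorial : ℂ) / (n' + 1).factorial *
            PowerSeries.coeff j (Sser (fun m => iteratedDeriv m g x) ^ (n' + 1)) :=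
        funext fun y => bellB_eq _ _ _
      rw [hfun]
      have hD0 := (hasDerivAt_coeff_pow (fun x => Sser (fun m => iteratedDeriv m g x))
          (fun x => Sd g x) x (fun m => hasDerivAt_coeff_Sg hg m x) n') j
      have hD := hD0.const_mul (c := ((j.factorial : ℂ) / ((n' + 1).factorial : ℂ)))
      refine HasDerivAt.congr_deriv hD ?_
      set S := Sser (fun m => iteratedDeriv m g x) with hS
      set A := PowerSeries.coeff j (S ^ n') with hA
      set B := PowerSeries.coeff j (S ^ n' * Sd g x) with hB
      set C2 := PowerSeries.coeff (j + 1) (S ^ (n' + 1)) with hC2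
      have hkey : C2 * ((j : ℂ) + 1) = ((n' : ℂ) + 1) * (deriv g x * A) + ((n' : ℂ) + 1) * B := by
        have hld2 : d⁄dX ℂ (S ^ (n' + 1)) =
            (n' + 1 : ℕ) • (S ^ n' * PowerSeries.C (deriv g x))
              + (n' + 1 : ℕ) • (S ^ n' * Sd g x) := by
          rw [Derivation.leibniz_pow (D := d⁄dX ℂ) (a := S) (n' + 1), derivative_Sg g x]
          simp only [Nat.add_sub_cancel, smul_eq_mul, nsmul_eq_mul]
          ring
        have e := congrArg (PowerSeries.coeff j) hld2
        rw [PowerSeries.coeff_derivative, map_add, map_nsmul, map_nsmul] at e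
        have eC : PowerSeries.coeff j (S ^ n' * PowerSeries.C (deriv g x))
            = deriv g x * A := by
          rw [mul_comm, PowerSeries.coeff_C_mul]
        rw [eC] at e
        rw [nsmul_eq_mul, nsmul_eq_mul] at e
        push_cast at e
        exact e
      -- final arithmetic
      rw [bellB_eq, bellB_eq, if_neg (Nat.succ_ne_zero n'), Nat.succ_sub_one]
      rw [map_nsmul, nsmul_eq_mul]
      rw [show (j+1).factorial = (j+1) * j.factorial from Nat.factorial_succ j,
        show (n'+1).factorial = (n'+1) * n'.factorial from Nat.factorial_succ n']
      have hf1 : ((j.factorial : ℕ) : ℂ) ≠ 0 := Nat.cast_ne_zero.2 (Nat.factorial_ne_zero _)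
      have hf2 : ((n'.factorial : ℕ) : ℂ) ≠ 0 := Nat.cast_ne_zero.2 (Nat.factorial_ne_zero _)
      have hj1 : ((j : ℂ) + 1) ≠ 0 := by
        have : ((j + 1 : ℕ) : ℂ) ≠ 0 := Nat.cast_ne_zero.2 (Nat.succ_ne_zero j)
        push_cast at this; exact this
      have hn1 : ((n' : ℂ) + 1) ≠ 0 := by
        have : ((n' + 1 : ℕ) : ℂ) ≠ 0 := Nat.cast_ne_zero.2 (Nat.succ_ne_zero n')
        push_cast at this; exact this
      push_cast
      rw [← hA, ← hB, ← hC2]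
      have e2 : C2 = (((n' : ℂ) + 1) * (deriv g x * A) + ((n' : ℂ) + 1) * B) / ((j : ℂ) + 1) := by
        rw [eq_div_iff hj1]
        linear_combination hkey
      rw [e2]
      field_simp
      ring

theorem faa {g : ℝ → ℂ} (hg : ContDiff ℝ (⊤ : ℕ∞) g) {f : ℂ → ℂ} (hf : Differentiable ℂ f) (j : ℕ) :
    ∀ x : ℝ, iteratedDeriv j (fun y => f (g y)) x =
      ∑ n ∈ Finset.range (j + 1),
        bellB j n (fun m => iteratedDeriv m g x) * iteratedDeriv n f (g x) := by
  have hfd : ∀ n : ℕ, Differentiable ℂ (iteratedDeriv n f) := fun n =>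
    (hf.contDiff (n := (⊤ : WithTop ℕ∞))).differentiable_iteratedDeriv n
      (by exact_mod_cast lt_top_iff_ne_top.2 (by simp))
  have hcomp : ∀ (n : ℕ) (x : ℝ), HasDerivAt (fun x => iteratedDeriv n f (g x))
      (deriv g x * iteratedDeriv (n + 1) f (g x)) x := by
    intro n x
    have h1 : HasDerivAt (iteratedDeriv n f) (iteratedDeriv (n + 1) f (g x)) (g x) := by
      rw [iteratedDeriv_succ]
      exact ((hfd n) (g x)).hasDerivAt
    have h2 : HasDerivAt g (deriv g x) x := ((hg.differentiable (by simp)) x).hasDerivAt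
    have h3 : HasDerivAt ((iteratedDeriv n f) ∘ g)
        (deriv g x • iteratedDeriv (n + 1) f (g x)) x := HasDerivAt.scomp (h := g) x h1 h2
    simpa [Function.comp_def, smul_eq_mul] using h3
  induction j with
  | zero =>
      intro x
      simp [bellB_zero_right]
  | succ j ih =>
      intro x
      have hIH : iteratedDeriv j (fun y => f (g y)) =
          fun x => ∑ n ∈ Finset.range (j + 2),
            bellB j n (fun m => iteratedDeriv m g x) * iteratedDeriv n f (g x) := by
        funext y
        rw [Finset.sum_range_succ (fun n => bellB j n (fun m => iteratedDeriv m g y)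
          * iteratedDeriv n f (g y)) (j + 1), bellB_vanish (Nat.lt_succ_self j), zero_mul,
          add_zero]
        exact ih y
      rw [iteratedDeriv_succ, hIH]
      have hsum : HasDerivAt (fun x => ∑ n ∈ Finset.range (j + 2),
          bellB j n (fun m => iteratedDeriv m g x) * iteratedDeriv n f (g x))
          (∑ n ∈ Finset.range (j + 2),
            ((bellB (j + 1) n (fun m => iteratedDeriv m g x)
              - deriv g x * (if n = 0 then 0
                  else bellB j (n - 1) (fun m => iteratedDeriv m g x)))
                * iteratedDeriv n f (g x)
              + bellB j n (fun m => iteratedDeriv m g x)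
                * (deriv g x * iteratedDeriv (n + 1) f (g x)))) x :=
        HasDerivAt.fun_sum fun n _ => (bellB_hasDerivAt hg j n x).mul (hcomp n x)
      rw [hsum.deriv]
      simp only [sub_mul]
      rw [Finset.sum_add_distrib, Finset.sum_sub_distrib]
      have h3 : (∑ n ∈ Finset.range (j + 2),
          (deriv g x * (if n = 0 then 0
            else bellB j (n - 1) (fun m => iteratedDeriv m g x)))
              * iteratedDeriv n f (g x))
          = ∑ n ∈ Finset.range (j + 2),
            bellB j n (fun m => iteratedDeriv m g x)
              * (deriv g x * iteratedDeriv (n + 1) f (g x)) := by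
        rw [Finset.sum_range_succ' _ (j + 1)]
        rw [Finset.sum_range_succ (fun n => bellB j n (fun m => iteratedDeriv m g x)
          * (deriv g x * iteratedDeriv (n + 1) f (g x))) (j + 1)]
        rw [bellB_vanish (Nat.lt_succ_self j), zero_mul, add_zero]
        rw [if_pos rfl, mul_zero, zero_mul, add_zero]
        refine Finset.sum_congr rfl fun i _ => ?_
        rw [if_neg (Nat.succ_ne_zero i), Nat.succ_sub_one]
        ring
      rw [h3]
      rw [sub_add_cancel]

/-- the convolution reindexing -/
lemma conv_reindex (m : ℕ) (h : ℕ → ℕ → ℂ) (hvan : ∀ n n', n + n' > m → h n n' = 0) :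
    ∑ n ∈ Finset.range (m + 1), ∑ n' ∈ Finset.range (m + 1), h n n'
      = ∑ N ∈ Finset.range (m + 1), ∑ p ∈ Finset.HasAntidiagonal.antidiagonal N, h p.1 p.2 := by
  classical
  have hdisj : (↑(Finset.range (m + 1)) : Set ℕ).PairwiseDisjoint Finset.HasAntidiagonal.antidiagonal := by
    intro a _ b _ hab
    simp only [Finset.disjoint_left]
    intro p hpa hpb
    rw [Finset.HasAntidiagonal.mem_antidiagonal] at hpa hpb
    exact hab (hpa ▸ hpb)
  rw [← Finset.sum_biUnion hdisj]
  rw [← Finset.sum_product' (f := fun n n' => h n n')]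
  have hsub : (Finset.range (m + 1)).biUnion Finset.HasAntidiagonal.antidiagonal ⊆
      Finset.range (m + 1) ×ˢ Finset.range (m + 1) := by
    intro p hp
    rw [Finset.mem_biUnion] at hp
    obtain ⟨N, hN, hpN⟩ := hp
    rw [Finset.HasAntidiagonal.mem_antidiagonal] at hpN
    rw [Finset.mem_range] at hN
    rw [Finset.mem_product, Finset.mem_range, Finset.mem_range]
    omega
  refine (Finset.sum_subset hsub fun p hp hnp => ?_).symm
  rw [Finset.mem_product, Finset.mem_range, Finset.mem_range] at hp
  refine hvan p.1 p.2 ?_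
  by_contra hle
  exact hnp (Finset.mem_biUnion.2 ⟨p.1 + p.2, Finset.mem_range.2 (by omega),
    Finset.HasAntidiagonal.mem_antidiagonal.2 rfl⟩)

theorem bellMatrix_comp_aux (g : ℝ → ℂ) (hg : ContDiff ℝ (⊤ : ℕ∞) g) (f : ℂ → ℂ)
    (hf : Differentiable ℂ f) :
    ∀ (j k : ℕ), k ≤ j → ∀ x : ℝ,
      bellB j k (fun m => iteratedDeriv m (fun y => f (g y)) x) =
        ∑ n ∈ Finset.Icc k j,
          bellB j n (fun m => iteratedDeriv m g x) *
            bellB n k (fun m => iteratedDeriv m f (g x)) := by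
  intro j k hk x
  set S : PowerSeries ℂ := Sser (fun m => iteratedDeriv m g x) with hS
  set T : PowerSeries ℂ := Sser (fun m => iteratedDeriv m f (g x)) with hT
  set U : PowerSeries ℂ := Sser (fun m => iteratedDeriv m (fun y => f (g y)) x) with hU
  have hS0 : PowerSeries.constantCoeff S = 0 := constantCoeff_Sser _
  have hT0 : PowerSeries.constantCoeff T = 0 := constantCoeff_Sser _
  set V : ℕ → PowerSeries ℂ := fun K => PowerSeries.mk fun m =>
    ∑ n ∈ Finset.range (m + 1),
      PowerSeries.coeff n (T ^ K) * PowerSeries.coeff m (S ^ n) with hV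
  -- Claim 1 : U and V 1 agree coefficientwise
  have claim1 : ∀ i, PowerSeries.coeff i U = PowerSeries.coeff i (V 1) := by
    intro i
    rw [hV]
    simp only [PowerSeries.coeff_mk, pow_one]
    cases i with
    | zero =>
        rw [Finset.sum_range_one]
        rw [hU, coeff_Sser, if_pos rfl]
        rw [← PowerSeries.coeff_zero_eq_constantCoeff_apply] at hT0
        rw [hT0, zero_mul]
    | succ i' =>
        rw [hU, coeff_Sser, if_neg (Nat.succ_ne_zero i'), faa hg hf (i' + 1) x,
          Finset.sum_div]
        refine Finset.sum_congr rfl fun n hn => ?_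
        rw [bellB_eq]
        by_cases h0 : n = 0
        · subst h0
          rw [pow_zero, PowerSeries.coeff_one, if_neg (Nat.succ_ne_zero i')]
          rw [← PowerSeries.coeff_zero_eq_constantCoeff_apply] at hT0
          rw [hT0]
          ring
        · rw [hT, coeff_Sser, if_neg h0]
          have h1 : ((i' + 1).factorial : ℂ) ≠ 0 := Nat.cast_ne_zero.2 (Nat.factorial_ne_zero _)
          have h2 : ((n).factorial : ℂ) ≠ 0 := Nat.cast_ne_zero.2 (Nat.factorial_ne_zero _)
          field_simp
          ring
  -- Claim : convolution identity
  have claimStep : ∀ K m, PowerSeries.coeff m (V (K + 1))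
      = PowerSeries.coeff m (V K * V 1) := by
    intro K m
    rw [PowerSeries.coeff_mul]
    have hterm : ∀ p ∈ Finset.HasAntidiagonal.antidiagonal m,
        PowerSeries.coeff p.1 (V K) * PowerSeries.coeff p.2 (V 1)
          = ∑ n ∈ Finset.range (m + 1), ∑ n' ∈ Finset.range (m + 1),
              (PowerSeries.coeff n (T ^ K) * PowerSeries.coeff p.1 (S ^ n))
                * (PowerSeries.coeff n' (T ^ 1) * PowerSeries.coeff p.2 (S ^ n')) := by
      intro p hp
      have hpm := Finset.HasAntidiagonal.mem_antidiagonal.1 hp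
      rw [hV]
      simp only [PowerSeries.coeff_mk]
      have e1 : ∑ n ∈ Finset.range (p.1 + 1),
          PowerSeries.coeff n (T ^ K) * PowerSeries.coeff p.1 (S ^ n)
          = ∑ n ∈ Finset.range (m + 1),
              PowerSeries.coeff n (T ^ K) * PowerSeries.coeff p.1 (S ^ n) := by
        refine Finset.sum_subset (Finset.range_subset_range.2 (by omega)) fun i hi hni => ?_
        rw [Finset.mem_range] at hi hni
        rw [pow_coeff_zero hS0 (by omega), mul_zero]
      have e2 : ∑ n' ∈ Finset.range (p.2 + 1),
          PowerSeries.coeff n' (T ^ 1) * PowerSeries.coeff p.2 (S ^ n')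
          = ∑ n' ∈ Finset.range (m + 1),
              PowerSeries.coeff n' (T ^ 1) * PowerSeries.coeff p.2 (S ^ n') := by
        refine Finset.sum_subset (Finset.range_subset_range.2 (by omega)) fun i hi hni => ?_
        rw [Finset.mem_range] at hi hni
        rw [pow_coeff_zero hS0 (by omega), mul_zero]
      rw [show (1 : ℕ) = 0 + 1 from rfl, pow_succ, pow_zero, one_mul] at e2 ⊢
      rw [e1, e2, Finset.sum_mul_sum]
    rw [Finset.sum_congr rfl hterm]
    rw [Finset.sum_comm]
    have hswap : ∀ n, ∑ p ∈ Finset.HasAntidiagonal.antidiagonal m, ∑ n' ∈ Finset.range (m + 1),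
        (PowerSeries.coeff n (T ^ K) * PowerSeries.coeff p.1 (S ^ n))
          * (PowerSeries.coeff n' (T ^ 1) * PowerSeries.coeff p.2 (S ^ n'))
        = ∑ n' ∈ Finset.range (m + 1),
            PowerSeries.coeff n (T ^ K) * PowerSeries.coeff n' (T ^ 1)
              * PowerSeries.coeff m (S ^ (n + n')) := by
      intro n
      rw [Finset.sum_comm]
      refine Finset.sum_congr rfl fun n' _ => ?_
      have : ∑ p ∈ Finset.HasAntidiagonal.antidiagonal m,
          (PowerSeries.coeff n (T ^ K) * PowerSeries.coeff p.1 (S ^ n))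
            * (PowerSeries.coeff n' (T ^ 1) * PowerSeries.coeff p.2 (S ^ n'))
          = PowerSeries.coeff n (T ^ K) * PowerSeries.coeff n' (T ^ 1)
              * ∑ p ∈ Finset.HasAntidiagonal.antidiagonal m,
                  PowerSeries.coeff p.1 (S ^ n) * PowerSeries.coeff p.2 (S ^ n') := by
        rw [Finset.mul_sum]
        exact Finset.sum_congr rfl fun p _ => by ring
      rw [this, ← PowerSeries.coeff_mul, ← pow_add]
    rw [Finset.sum_congr rfl fun n _ => hswap n]
    -- now both sides are double sums; use conv_reindex
    rw [conv_reindex m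
      (fun n n' => PowerSeries.coeff n (T ^ K) * PowerSeries.coeff n' (T ^ 1)
        * PowerSeries.coeff m (S ^ (n + n')))
      (fun n n' hgt => by rw [pow_coeff_zero hS0 hgt, mul_zero])]
    rw [hV]
    simp only [PowerSeries.coeff_mk]
    refine Finset.sum_congr rfl fun N hN => ?_
    rw [pow_succ, PowerSeries.coeff_mul, Finset.sum_mul]
    refine Finset.sum_congr rfl fun p hp => ?_
    have hpN := Finset.HasAntidiagonal.mem_antidiagonal.1 hp
    rw [pow_one, hpN]
  -- Claim : V K agrees with (V 1)^K coefficientwise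
  have claimPow : ∀ K m, PowerSeries.coeff m (V K) = PowerSeries.coeff m ((V 1) ^ K) := by
    intro K
    induction K with
    | zero =>
        intro m
        rw [hV]
        simp only [PowerSeries.coeff_mk, pow_zero]
        have : ∀ n ∈ Finset.range (m + 1), PowerSeries.coeff n (1 : PowerSeries ℂ)
            * PowerSeries.coeff m (S ^ n)
            = if n = 0 then PowerSeries.coeff m (S ^ n) else 0 := by
          intro n _
          rw [PowerSeries.coeff_one]
          by_cases h : n = 0 <;> simp [h]
        rw [Finset.sum_congr rfl this, Finset.sum_ite_eq' (Finset.range (m + 1)) 0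
          (fun n => PowerSeries.coeff m (S ^ n)), if_pos (Finset.mem_range.2 (by omega))]
        rw [pow_zero]
    | succ K ih =>
        intro m
        rw [claimStep K m, pow_succ]
        exact coeff_mul_congr (fun i _ => ih i) (fun i _ => rfl) m le_rfl
  -- final assembly
  rw [show (fun m => iteratedDeriv m (fun y => f (g y)) x) =
    (fun m => iteratedDeriv m (fun y => f (g y)) x) from rfl]
  rw [bellB_eq j k (fun m => iteratedDeriv m (fun y => f (g y)) x)]
  have hUV : PowerSeries.coeff j (U ^ k) = PowerSeries.coeff j (V k) := by
    rw [coeff_pow_congr (fun i _ => claim1 i) k j le_rfl, claimPow k j]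
  rw [← hU, hUV, hV]
  simp only [PowerSeries.coeff_mk]
  have hRHS : ∀ n ∈ Finset.Icc k j,
      bellB j n (fun m => iteratedDeriv m g x) * bellB n k (fun m => iteratedDeriv m f (g x))
        = (j.factorial : ℂ) / k.factorial *
            (PowerSeries.coeff n (T ^ k) * PowerSeries.coeff j (S ^ n)) := by
    intro n _
    rw [bellB_eq, bellB_eq, ← hS, ← hT]
    have h2 : ((n).factorial : ℂ) ≠ 0 := Nat.cast_ne_zero.2 (Nat.factorial_ne_zero _)
    have hcan : (j.factorial : ℂ) / n.factorial * ((n.factorial : ℂ) / k.factorial)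
        = (j.factorial : ℂ) / k.factorial := by
      field_simp
    calc (j.factorial : ℂ) / n.factorial * PowerSeries.coeff j (S ^ n)
          * ((n.factorial : ℂ) / k.factorial * PowerSeries.coeff n (T ^ k))
        = (j.factorial : ℂ) / n.factorial * ((n.factorial : ℂ) / k.factorial)
            * (PowerSeries.coeff n (T ^ k) * PowerSeries.coeff j (S ^ n)) := by ring
      _ = (j.factorial : ℂ) / k.factorial
            * (PowerSeries.coeff n (T ^ k) * PowerSeries.coeff j (S ^ n)) := by rw [hcan]
  rw [Finset.sum_congr rfl hRHS, ← Finset.mul_sum]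
  congr 1
  refine (Finset.sum_subset (fun n hn => ?_) fun n hn hnn => ?_).symm
  · rw [Finset.mem_Icc] at hn
    rw [Finset.mem_range]
    omega
  · rw [Finset.mem_range] at hn
    rw [Finset.mem_Icc] at hnn
    rw [pow_coeff_zero hT0 (by omega), zero_mul]


end FdB

/-- Composition rule for Bell matrices: for `g : ℝ → ℂ` smooth and `f : ℂ → ℂ` entire,
`B_{j,k}[f∘g](x) = Σ_{n=k}^{j} B_{j,n}[g](x) · B_{n,k}[f](g(x))` for all `j ≥ k ≥ 0`,
where `B[f∘g]` is built from the real derivatives of `f ∘ g`, `B[g]` from those of `g`,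
and `B[f]` from the complex derivatives of `f` at `g(x)`. -/
theorem bellMatrix_comp (g : ℝ → ℂ) (hg : ContDiff ℝ (⊤ : ℕ∞) g) (f : ℂ → ℂ)
    (hf : Differentiable ℂ f) :
    ∀ (j k : ℕ), k ≤ j → ∀ x : ℝ,
      bellB j k (fun m => iteratedDeriv m (fun y => f (g y)) x) =
        ∑ n ∈ Finset.Icc k j,
          bellB j n (fun m => iteratedDeriv m g x) *
            bellB n k (fun m => iteratedDeriv m f (g x)) :=
  FdB.bellMatrix_comp_aux g hg f hf
end

section
/- Fix integers p ≥ 2 and 0 ≤ i ≤ ⌊(p−1)/2⌋. If u : ℝ^{1+n} → ℂ is a smooth solution of the (p,i)-submodel and f : ℂ → ℂ is any holomorphic (entire) function, then the composite v := f∘u is also a solution of the (p,i)-submodel. -/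
open Finset

section helpers

variable {𝕜 : Type*} [NontriviallyNormedField 𝕜] [NormedAlgebra 𝕜 ℂ]

lemma itd_add (m : ℕ) (F G : 𝕜 → ℂ) (hF : ContDiff 𝕜 (⊤ : ℕ∞) F)
    (hG : ContDiff 𝕜 (⊤ : ℕ∞) G) (t : 𝕜) :
    iteratedDeriv m (fun s => F s + G s) t = iteratedDeriv m F t + iteratedDeriv m G t := by
  simp only [← iteratedDerivWithin_univ]
  exact iteratedDerivWithin_add (Set.mem_univ t) uniqueDiffOn_univ
    ((hF.of_le (by exact_mod_cast le_top)).contDiffWithinAt) ((hG.of_le (by exact_mod_cast le_top)).contDiffWithinAt)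

lemma itd_cmul (m : ℕ) (c : ℂ) (F : 𝕜 → ℂ) (hF : ContDiff 𝕜 (⊤ : ℕ∞) F) (t : 𝕜) :
    iteratedDeriv m (fun s => c * F s) t = c * iteratedDeriv m F t := by
  simp only [← iteratedDerivWithin_univ]
  have := iteratedDerivWithin_const_smul (n := m) (Set.mem_univ t) uniqueDiffOn_univ c
    ((hF.of_le (by exact_mod_cast le_top)).contDiffWithinAt)
  simpa [smul_eq_mul] using this

lemma itd_zero_fun (m : ℕ) (t : 𝕜) : iteratedDeriv m (fun _ : 𝕜 => (0 : ℂ)) t = 0 := by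
  induction m generalizing t with
  | zero => simp
  | succ b ih =>
    rw [iteratedDeriv_succ']
    have : deriv (fun _ : 𝕜 => (0 : ℂ)) = fun _ : 𝕜 => (0 : ℂ) := by
      funext s; exact deriv_const s 0
    rw [this]; exact ih t

lemma itd_const_ne (m : ℕ) (hm : m ≠ 0) (c : ℂ) (t : 𝕜) :
    iteratedDeriv m (fun _ : 𝕜 => c) t = 0 := by
  obtain ⟨b, rfl⟩ := Nat.exists_eq_succ_of_ne_zero hm
  rw [iteratedDeriv_succ']
  have : deriv (fun _ : 𝕜 => c) = fun _ : 𝕜 => (0 : ℂ) := by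
    funext s; exact deriv_const s c
  rw [this]; exact itd_zero_fun b t

lemma itd_sum {ι : Type*} (m : ℕ) (s : Finset ι) (F : ι → 𝕜 → ℂ)
    (hF : ∀ j ∈ s, ContDiff 𝕜 (⊤ : ℕ∞) (F j)) (t : 𝕜) :
    iteratedDeriv m (fun r => ∑ j ∈ s, F j r) t = ∑ j ∈ s, iteratedDeriv m (F j) t := by
  classical
  induction s using Finset.induction with
  | empty => simpa using itd_zero_fun m t
  | insert _ _ hj ih =>
    rename_i a s'
    rw [Finset.sum_insert hj]
    have h1 : ContDiff 𝕜 (⊤ : ℕ∞) (F a) := hF a (Finset.mem_insert_self a s')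
    have h2 : ContDiff 𝕜 (⊤ : ℕ∞) (fun r => ∑ j ∈ s', F j r) :=
      ContDiff.sum fun j hjs => hF j (Finset.mem_insert_of_mem hjs)
    have : (fun r => ∑ j ∈ insert a s', F j r)
        = fun r => F a r + ∑ j ∈ s', F j r := by
      funext r; rw [Finset.sum_insert hj]
    rw [this, itd_add m _ _ h1 h2 t, ih (fun j hjs => hF j (Finset.mem_insert_of_mem hjs))]

lemma itd_conj (m : ℕ) (F : ℝ → ℂ) (t : ℝ) :
    iteratedDeriv m (fun s => (starRingEnd ℂ) (F s)) t
      = (starRingEnd ℂ) (iteratedDeriv m F t) := by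
  have h := Complex.conjCLE.iteratedFDerivWithin_comp_left F uniqueDiffOn_univ
    (Set.mem_univ t) m
  simp only [iteratedFDerivWithin_univ] at h
  rw [iteratedDeriv_eq_iteratedFDeriv, iteratedDeriv_eq_iteratedFDeriv]
  have hfun : (⇑Complex.conjCLE ∘ F) = fun s => (starRingEnd ℂ) (F s) := by
    funext s; simp [Complex.conjCLE]
  rw [← hfun, h]
  simp [Complex.conjCLE]

end helpers
section part2

lemma deriv_comp_fun (h : ℂ → ℂ) (hh : Differentiable ℂ h) (w : ℝ → ℂ)
    (hw : Differentiable ℝ w) :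
    deriv (fun t => h (w t)) = fun t => deriv h (w t) * deriv w t := by
  funext t
  exact ((hh (w t)).hasDerivAt.comp t (hw t).hasDerivAt).deriv

lemma itd_monomial (j : ℕ) : ∀ r : ℕ,
    iteratedDeriv r (fun ζ : ℂ => ζ ^ j) = fun ζ => (j.descFactorial r : ℂ) * ζ ^ (j - r) := by
  intro r
  induction r with
  | zero => funext ζ; simp
  | succ r ih =>
    rw [iteratedDeriv_succ, ih]
    funext ζ
    rw [deriv_const_mul _ (differentiableAt_pow _)]
    rw [deriv_pow_field]
    rw [Nat.descFactorial_succ]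
    push_cast
    rw [Nat.sub_sub]
    ring

lemma itd_centered (j r : ℕ) (z : ℂ) :
    iteratedDeriv r (fun ζ : ℂ => (ζ - z) ^ j) z
      = (j.descFactorial r : ℂ) * (0 : ℂ) ^ (j - r) := by
  have h1 : (fun ζ : ℂ => (ζ - z) ^ j) = fun ζ : ℂ => (fun y : ℂ => y ^ j) (ζ + (-z)) := by
    funext ζ; rw [sub_eq_add_neg]
  rw [h1]
  rw [congrFun (iteratedDeriv_comp_add_const r (fun y : ℂ => y ^ j) (-z)) z]
  rw [itd_monomial]
  simp

end part2

section part3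

lemma itd_mul_zero (t₀ : ℝ) :
    ∀ (b : ℕ) (F G : ℝ → ℂ), ContDiff ℝ (⊤ : ℕ∞) F → ContDiff ℝ (⊤ : ℕ∞) G →
      (∀ r ≤ b, iteratedDeriv r F t₀ = 0) →
      iteratedDeriv b (fun s => F s * G s) t₀ = 0 := by
  intro b
  induction b with
  | zero =>
    intro F G _ _ hv
    have h0 := hv 0 le_rfl
    rw [iteratedDeriv_zero] at h0 ⊢
    rw [h0, zero_mul]
  | succ b ih =>
    intro F G hF hG hv
    have hF' : ContDiff ℝ (⊤ : ℕ∞) (deriv F) := (contDiff_infty_iff_deriv.mp hF).2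
    have hG' : ContDiff ℝ (⊤ : ℕ∞) (deriv G) := (contDiff_infty_iff_deriv.mp hG).2
    rw [iteratedDeriv_succ']
    have hd : deriv (fun s => F s * G s) = fun s => deriv F s * G s + F s * deriv G s := by
      funext s
      exact deriv_fun_mul ((hF.differentiable (by simp)) s)
        ((hG.differentiable (by simp)) s)
    rw [hd, itd_add b _ _ (hF'.mul hG) (hF.mul hG') t₀]
    have e1 : iteratedDeriv b (fun s => deriv F s * G s) t₀ = 0 := by
      apply ih _ _ hF' hG
      intro r hr
      rw [← iteratedDeriv_succ']
      exact hv (r + 1) (Nat.succ_le_succ hr)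
    have e2 : iteratedDeriv b (fun s => F s * deriv G s) t₀ = 0 := by
      apply ih _ _ hF hG'
      intro r hr
      exact hv r (le_trans hr (Nat.le_succ b))
    rw [e1, e2, add_zero]

lemma comp_jet_zero (w : ℝ → ℂ) (hw : ContDiff ℝ (⊤ : ℕ∞) w) (t₀ : ℝ) :
    ∀ (a : ℕ) (h : ℂ → ℂ), Differentiable ℂ h →
      (∀ j ≤ a, iteratedDeriv j h (w t₀) = 0) →
      iteratedDeriv a (fun t => h (w t)) t₀ = 0 := by
  intro a
  induction a using Nat.strong_induction_on with
  | _ a IH =>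
    intro h hh hjet
    match a with
    | 0 =>
      have h0 := hjet 0 le_rfl
      rw [iteratedDeriv_zero] at h0 ⊢
      exact h0
    | b + 1 =>
      rw [iteratedDeriv_succ', deriv_comp_fun h hh w (hw.differentiable (by simp))]
      have hh' : Differentiable ℂ (deriv h) :=
        ((hh.contDiff (n := (⊤ : ℕ∞))).iterate_deriv 1).differentiable (by simp)
      apply itd_mul_zero t₀ b (fun t => deriv h (w t)) (deriv w)
      · exact ((hh'.contDiff (n := (⊤ : ℕ∞))).restrict_scalars ℝ).comp hw
      · exact (contDiff_infty_iff_deriv.mp hw).2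
      · intro r hr
        apply IH r (Nat.lt_succ_of_le hr) (deriv h) hh'
        intro j hj
        rw [← iteratedDeriv_succ']
        exact hjet (j + 1) (Nat.succ_le_succ (le_trans hj hr))

end part3

section key

/-- Main reduction: the `m`-th derivative of `g ∘ w` at `t₀` is a universal linear
combination of the `m`-th derivatives of powers of `w`, with coefficients depending
only on `g`, `m` and the value `z = w t₀`. -/
lemma key_lemma (g : ℂ → ℂ) (hg : Differentiable ℂ g) (m : ℕ) (z : ℂ) :
    ∃ c : ℕ → ℂ, ∀ w : ℝ → ℂ, ContDiff ℝ (⊤ : ℕ∞) w → ∀ t₀ : ℝ, w t₀ = z →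
      iteratedDeriv m (fun t => g (w t)) t₀
        = ∑ k ∈ Finset.range (m + 1), c k * iteratedDeriv m (fun t => w t ^ k) t₀ := by
  classical
  set a : ℕ → ℂ := fun j => iteratedDeriv j g z / (j.factorial : ℂ) with ha
  set s : ℕ → ℕ → ℂ := fun j k => a j * ((-z) ^ (j - k) * (j.choose k : ℂ)) with hs
  refine ⟨fun k => ∑ j ∈ Finset.range (m + 1), s j k, ?_⟩
  intro w hw t₀ ht
  set Q : ℂ → ℂ := fun ζ => ∑ j ∈ Finset.range (m + 1), a j * (ζ - z) ^ j with hQ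
  have hQs : ContDiff ℂ (⊤ : ℕ∞) Q :=
    ContDiff.sum fun j _ => contDiff_const.mul ((contDiff_id.sub contDiff_const).pow j)
  have hgs : ContDiff ℂ (⊤ : ℕ∞) g := hg.contDiff
  -- jets of Q at z agree with jets of g
  have hQjet : ∀ r ≤ m, iteratedDeriv r Q z = iteratedDeriv r g z := by
    intro r hr
    have h1 : iteratedDeriv r Q z
        = ∑ j ∈ Finset.range (m + 1), a j * ((j.descFactorial r : ℂ) * (0:ℂ) ^ (j - r)) := by
      rw [hQ]
      rw [itd_sum r (Finset.range (m+1)) (fun j => fun ζ => a j * (ζ - z) ^ j)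
        (fun j _ => contDiff_const.mul ((contDiff_id.sub contDiff_const).pow j)) z]
      refine Finset.sum_congr rfl fun j _ => ?_
      rw [itd_cmul r (a j) (fun ζ => (ζ - z) ^ j)
        (by exact (contDiff_id.sub contDiff_const).pow j) z, itd_centered]
    rw [h1, Finset.sum_eq_single r]
    · rw [ha]
      simp only [Nat.sub_self, pow_zero, mul_one, Nat.descFactorial_self]
      rw [div_mul_cancel₀]
      exact_mod_cast Nat.factorial_ne_zero r
    · intro j _ hjr
      rcases lt_or_gt_of_ne hjr with hlt | hgt
      · rw [Nat.descFactorial_eq_zero_iff_lt.mpr hlt]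
        simp
      · rw [zero_pow (Nat.sub_ne_zero_of_lt hgt)]
        simp
    · intro hrm
      exact absurd (Finset.mem_range.mpr (Nat.lt_succ_of_le hr)) hrm
  -- the remainder h := g - Q has vanishing jets at z up to order m
  have hrem : ∀ r ≤ m, iteratedDeriv r (fun ζ => g ζ - Q ζ) z = 0 := by
    intro r hr
    have : (fun ζ => g ζ - Q ζ) = fun ζ => g ζ + (-1 : ℂ) * Q ζ := by
      funext ζ; ring
    rw [this, itd_add r _ _ hgs (contDiff_const.mul hQs) z,
      itd_cmul r (-1) Q hQs z, hQjet r hr]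
    ring
  -- split g ∘ w
  have hsplit : (fun t => g (w t)) = fun t => (g (w t) - Q (w t)) + Q (w t) := by
    funext t; ring
  have hwsm : ∀ k : ℕ, ContDiff ℝ (⊤ : ℕ∞) (fun t => w t ^ k) := fun k => hw.pow k
  have hQw : ContDiff ℝ (⊤ : ℕ∞) (fun t => Q (w t)) :=
    (hQs.restrict_scalars ℝ).comp hw
  have hgw : ContDiff ℝ (⊤ : ℕ∞) (fun t => g (w t)) :=
    (hgs.restrict_scalars ℝ).comp hw
  have hrw : ContDiff ℝ (⊤ : ℕ∞) (fun t => g (w t) - Q (w t)) := hgw.sub hQw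
  rw [hsplit, itd_add m _ _ hrw hQw t₀]
  have hzero : iteratedDeriv m (fun t => g (w t) - Q (w t)) t₀ = 0 := by
    have := comp_jet_zero w hw t₀ m (fun ζ => g ζ - Q ζ) (hg.sub (hQs.differentiable (by simp)))
    rw [ht] at this
    exact this hrem
  rw [hzero, zero_add]
  -- expand Q ∘ w into powers of w
  have hexp : (fun t => Q (w t))
      = fun t => ∑ j ∈ Finset.range (m + 1), ∑ k ∈ Finset.range (j + 1),
          s j k * w t ^ k := by
    funext t
    rw [hQ]
    refine Finset.sum_congr rfl fun j _ => ?_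
    rw [sub_eq_add_neg, add_pow, Finset.mul_sum]
    refine Finset.sum_congr rfl fun k _ => ?_
    rw [hs]
    ring
  rw [hexp]
  have hsmooth2 : ∀ j ∈ Finset.range (m+1), ContDiff ℝ (⊤ : ℕ∞)
      (fun t => ∑ k ∈ Finset.range (j + 1), s j k * w t ^ k) :=
    fun j _ => ContDiff.sum fun k _ => contDiff_const.mul (hwsm k)
  rw [itd_sum m _ _ hsmooth2 t₀]
  have hinner : ∀ j ∈ Finset.range (m+1),
      iteratedDeriv m (fun t => ∑ k ∈ Finset.range (j + 1), s j k * w t ^ k) t₀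
        = ∑ k ∈ Finset.range (m + 1), s j k * iteratedDeriv m (fun t => w t ^ k) t₀ := by
    intro j hj
    rw [itd_sum m _ _ (fun k _ => contDiff_const.mul (hwsm k)) t₀]
    have : ∀ k ∈ Finset.range (j+1),
        iteratedDeriv m (fun t => s j k * w t ^ k) t₀
          = s j k * iteratedDeriv m (fun t => w t ^ k) t₀ :=
      fun k _ => itd_cmul m (s j k) _ (hwsm k) t₀
    rw [Finset.sum_congr rfl this]
    refine Finset.sum_subset (Finset.range_subset_range.mpr (Finset.mem_range.mp hj)) ?_
    intro k _ hk
    have hjk : j < k := by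
      by_contra hc
      exact hk (Finset.mem_range.mpr (Nat.lt_succ_of_le (not_lt.mp hc)))
    rw [hs]
    simp [Nat.choose_eq_zero_of_lt hjk]
  rw [Finset.sum_congr rfl hinner, Finset.sum_comm]
  refine Finset.sum_congr rfl fun k _ => ?_
  rw [Finset.sum_mul]

end key

/-- Iterated partial derivative `∂_μᵐ u (x)` of `u : ℝ^{1+n} → ℂ` in the coordinate `x_μ`. -/
noncomputable def ipd {n : ℕ} (μ : Fin (n + 1)) (m : ℕ)
    (u : (Fin (n + 1) → ℝ) → ℂ) (x : Fin (n + 1) → ℝ) : ℂ :=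
  iteratedDeriv m (fun t => u (Function.update x μ t)) (x μ)

/-- The Minkowski sum `Σ'_μ A_μ = A₀ − Σ_{j=1}^{n} A_j`. -/
noncomputable def minkSum {n : ℕ} (A : Fin (n + 1) → ℂ) : ℂ := A 0 - ∑ j : Fin n, A j.succ

/-- `u : ℝ^{1+n} → ℂ` solves the `(p,i)`-submodel:
`Σ'_μ ∂_μ^{p−i}(uᵏ)·∂_μ^{i}(ūˡ) = 0` for all `k = 1,…,p−i` and `l = 0,…,i`. -/
def SolvesSubmodel {n : ℕ} (p i : ℕ) (u : (Fin (n + 1) → ℝ) → ℂ) : Prop :=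
  ∀ k ∈ Finset.Icc 1 (p - i), ∀ l ∈ Finset.Icc 0 i, ∀ x,
    minkSum (fun μ => ipd μ (p - i) (fun y => u y ^ k) x *
      ipd μ i (fun y => (starRingEnd ℂ) (u y) ^ l) x) = 0

lemma minkSum_cmul {n : ℕ} (c : ℂ) (A : Fin (n + 1) → ℂ) :
    minkSum (fun μ => c * A μ) = c * minkSum A := by
  unfold minkSum
  rw [← Finset.mul_sum]
  ring

lemma minkSum_sum {n : ℕ} {ι : Type*} (S : Finset ι) (F : ι → Fin (n + 1) → ℂ) :
    minkSum (fun μ => ∑ s ∈ S, F s μ) = ∑ s ∈ S, minkSum (F s) := by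
  unfold minkSum
  rw [Finset.sum_comm, Finset.sum_sub_distrib]

lemma minkSum_zero_fun {n : ℕ} : minkSum (fun _ : Fin (n + 1) => (0 : ℂ)) = 0 := by
  simp [minkSum]

/-- Bäcklund-like transformation: if a smooth `u` solves the `(p,i)`-submodel and
`f : ℂ → ℂ` is entire, then `v = f ∘ u` also solves the `(p,i)`-submodel. -/
theorem submodel_backlund {n : ℕ} (p i : ℕ) (hp : 2 ≤ p) (hi : i ≤ (p - 1) / 2)
    (u : (Fin (n + 1) → ℝ) → ℂ) (hu : ContDiff ℝ (⊤ : ℕ∞) u) (hsol : SolvesSubmodel p i u)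
    (f : ℂ → ℂ) (hf : Differentiable ℂ f) :
    SolvesSubmodel p i (fun x => f (u x)) := by
  intro k hk l hl x
  have hd2 : (p - 1) / 2 ≤ p - 1 := Nat.div_le_self _ _
  have hm1 : 1 ≤ p - i := by omega
  have hl' : l ≤ i := (Finset.mem_Icc.mp hl).2
  obtain ⟨c1, hc1⟩ := key_lemma (fun ζ => f ζ ^ k) (hf.pow k) (p - i) (u x)
  obtain ⟨c2, hc2⟩ := key_lemma (fun ζ => f ζ ^ l) (hf.pow l) i (u x)
  have husm : ContDiff ℝ (⊤ : ℕ∞) u := hu.of_le (by simp)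
  have hw : ∀ μ : Fin (n + 1), ContDiff ℝ (⊤ : ℕ∞) (fun t => u (Function.update x μ t)) :=
    fun μ => husm.comp (contDiff_update _ x μ)
  have hwx : ∀ μ : Fin (n + 1), u (Function.update x μ (x μ)) = u x :=
    fun μ => by rw [Function.update_eq_self]
  -- abbreviations
  set A : Fin (n + 1) → ℕ → ℂ := fun μ k' => ipd μ (p - i) (fun y => u y ^ k') x with hA
  set B : Fin (n + 1) → ℕ → ℂ :=
    fun μ l' => ipd μ i (fun y => (starRingEnd ℂ) (u y) ^ l') x with hB
  -- expansion of the first factor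
  have h1 : ∀ μ, ipd μ (p - i) (fun y => f (u y) ^ k) x
      = ∑ k' ∈ Finset.range (p - i + 1), c1 k' * A μ k' :=
    fun μ => hc1 (fun t => u (Function.update x μ t)) (hw μ) (x μ) (hwx μ)
  -- expansion of the second (conjugated) factor
  have h2 : ∀ μ, ipd μ i (fun y => (starRingEnd ℂ) (f (u y)) ^ l) x
      = ∑ l' ∈ Finset.range (i + 1), (starRingEnd ℂ) (c2 l') * B μ l' := by
    intro μ
    show iteratedDeriv i
      (fun t => (starRingEnd ℂ) (f (u (Function.update x μ t))) ^ l) (x μ) = _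
    have e1 : (fun t => (starRingEnd ℂ) (f (u (Function.update x μ t))) ^ l)
        = fun t => (starRingEnd ℂ) (f (u (Function.update x μ t)) ^ l) := by
      funext t; rw [map_pow]
    rw [e1, itd_conj,
      hc2 (fun t => u (Function.update x μ t)) (hw μ) (x μ) (hwx μ), map_sum]
    refine Finset.sum_congr rfl fun l' _ => ?_
    rw [map_mul]
    congr 1
    show _ = iteratedDeriv i
      (fun t => (starRingEnd ℂ) (u (Function.update x μ t)) ^ l') (x μ)
    have e2 : (fun t => (starRingEnd ℂ) (u (Function.update x μ t)) ^ l')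
        = fun t => (starRingEnd ℂ) (u (Function.update x μ t) ^ l') := by
      funext t; rw [map_pow]
    rw [e2, itd_conj]
  -- rewrite each term of the Minkowski sum
  have hterm : ∀ μ, ipd μ (p - i) (fun y => f (u y) ^ k) x *
      ipd μ i (fun y => (starRingEnd ℂ) (f (u y)) ^ l) x
      = ∑ k' ∈ Finset.range (p - i + 1), ∑ l' ∈ Finset.range (i + 1),
          (c1 k' * (starRingEnd ℂ) (c2 l')) * (A μ k' * B μ l') := by
    intro μ
    rw [h1 μ, h2 μ, Finset.sum_mul_sum]
    exact Finset.sum_congr rfl fun k' _ => Finset.sum_congr rfl fun l' _ => by ring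
  show minkSum (fun μ => ipd μ (p - i) (fun y => f (u y) ^ k) x *
      ipd μ i (fun y => (starRingEnd ℂ) (f (u y)) ^ l) x) = 0
  rw [congrArg minkSum (funext hterm), minkSum_sum]
  refine Finset.sum_eq_zero fun k' hk' => ?_
  rw [minkSum_sum]
  refine Finset.sum_eq_zero fun l' hl'' => ?_
  rw [minkSum_cmul]
  rcases Nat.eq_zero_or_pos k' with hk0 | hk0
  · -- k' = 0 : the first factor vanishes since p - i ≥ 1
    subst hk0
    have hA0 : ∀ μ, A μ 0 = 0 := by
      intro μ
      show iteratedDeriv (p - i) (fun t => u (Function.update x μ t) ^ 0) (x μ) = 0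
      have : (fun t => u (Function.update x μ t) ^ 0) = fun _ : ℝ => (1 : ℂ) := by
        funext t; rw [pow_zero]
      rw [this]
      exact itd_const_ne (p - i) (by omega) 1 (x μ)
    have : (fun μ => A μ 0 * B μ l') = fun _ => (0 : ℂ) := by
      funext μ; rw [hA0 μ, zero_mul]
    rw [this, minkSum_zero_fun, mul_zero]
  · have hz : minkSum (fun μ => A μ k' * B μ l') = 0 :=
      hsol k' (Finset.mem_Icc.mpr ⟨hk0, by
        have := Finset.mem_range.mp hk'; omega⟩)
        l' (Finset.mem_Icc.mpr ⟨Nat.zero_le _, by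
          have := Finset.mem_range.mp hl''; omega⟩) x
    rw [hz, mul_zero]
end

section
/- Fix integers p ≥ 2 and 0 ≤ i ≤ ⌊(p−1)/2⌋. Let a₀, a₁, …, aₙ ∈ ℂ satisfy Σ'_μ a_μ^{p−i} · ā_μ^{i} = 0, where ā_μ is the complex conjugate of a_μ. Then the linear function u(x₀,…,xₙ) := a₀x₀ + Σ_{j=1}^{n} a_j x_j is a solution of the (p,i)-submodel. -/
/-!
For a linear `u = Σ_μ a_μ x_μ`, the derivative `∂_μ^m (uᵉ)` equals `e(e-1)⋯(e-m+1) · a_μ^m · u^{e-m}`,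
and likewise for `ū = Σ_μ ā_μ x_μ`. Hence the `μ`-th term of each submodel equation is
`a_μ^{p-i} ā_μ^{i}` times a factor independent of `μ`, and the Minkowski sum vanishes by hypothesis.
-/

lemma iteratedDeriv_affine_pow (b c : ℂ) (k m : ℕ) :
    iteratedDeriv m (fun t : ℝ => (b * t + c) ^ k) =
      fun t : ℝ => (k.descFactorial m : ℂ) * b ^ m * (b * t + c) ^ (k - m) := by
  induction m with
  | zero => simp
  | succ m ih =>
    rw [iteratedDeriv_succ, ih]
    funext t
    have hpow : HasDerivAt (fun z : ℂ => (b * z + c) ^ (k - m))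
        ((k - m : ℕ) * (b * t + c) ^ (k - m - 1) * b) t := by
      simpa [Pi.pow_def] using (((hasDerivAt_id (t : ℂ)).const_mul b).add_const c).pow (k - m)
    rw [(hpow.comp_ofReal.const_mul ((k.descFactorial m : ℂ) * b ^ m)).deriv,
      Nat.sub_sub, Nat.descFactorial_succ]
    push_cast
    ring

lemma sum_mul_update {n : ℕ} (b : Fin n → ℂ) (x : Fin n → ℝ) (μ : Fin n) (t : ℝ) :
    ∑ ν, b ν * (Function.update x μ t ν : ℂ) =
      b μ * t + (∑ ν, b ν * (x ν : ℂ) - b μ * x μ) := by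
  have hupdate : (fun ν => b ν * (Function.update x μ t ν : ℂ)) =
      Function.update (fun ν => b ν * (x ν : ℂ)) μ (b μ * t) := by
    funext ν
    rcases eq_or_ne ν μ with rfl | hne
    · simp
    · simp [Function.update_of_ne hne]
  rw [hupdate, Finset.sum_update_of_mem (Finset.mem_univ μ), Finset.sdiff_singleton_eq_erase,
    Finset.sum_erase_eq_sub (Finset.mem_univ μ)]

lemma ipd_linear_pow {n : ℕ} (b : Fin (n + 1) → ℂ) (μ : Fin (n + 1)) (e m : ℕ)
    (x : Fin (n + 1) → ℝ) :
    ipd μ m (fun y => (∑ ν, b ν * (y ν : ℂ)) ^ e) x =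
      (e.descFactorial m : ℂ) * b μ ^ m * (∑ ν, b ν * (x ν : ℂ)) ^ (e - m) := by
  simp only [ipd, sum_mul_update, iteratedDeriv_affine_pow]
  ring_nf

lemma conj_sum_mul_ofReal {ι : Type*} [Fintype ι] (a : ι → ℂ) (y : ι → ℝ) :
    starRingEnd ℂ (∑ ν, a ν * (y ν : ℂ)) = ∑ ν, starRingEnd ℂ (a ν) * (y ν : ℂ) := by
  simp [map_sum, Complex.conj_ofReal]

lemma minkSum_const_mul {n : ℕ} (K : ℂ) (f : Fin (n + 1) → ℂ) :
    minkSum (fun μ => K * f μ) = K * minkSum f := by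
  simp [minkSum, Finset.mul_sum, mul_sub]

theorem submodel_linear_solution_general {n : ℕ} (p i : ℕ)
    (a : Fin (n + 1) → ℂ)
    (ha : minkSum (fun μ => a μ ^ (p - i) * (starRingEnd ℂ) (a μ) ^ i) = 0) :
    SolvesSubmodel p i (fun x => ∑ μ, a μ * (x μ : ℂ)) := by
  intro k _ l _ x
  set u := ∑ ν, a ν * (x ν : ℂ)
  set ū := ∑ ν, starRingEnd ℂ (a ν) * (x ν : ℂ)
  have hterm : ∀ μ, ipd μ (p - i) (fun y => (∑ ν, a ν * (y ν : ℂ)) ^ k) x *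
      ipd μ i (fun y => starRingEnd ℂ (∑ ν, a ν * (y ν : ℂ)) ^ l) x =
      (k.descFactorial (p - i) * l.descFactorial i * u ^ (k - (p - i)) * ū ^ (l - i)) *
        (a μ ^ (p - i) * starRingEnd ℂ (a μ) ^ i) := by
    intro μ
    simp only [conj_sum_mul_ofReal, ipd_linear_pow]
    ring
  rw [funext hterm, minkSum_const_mul, ha, mul_zero]

/-- Linear solutions: if `a₀,…,aₙ ∈ ℂ` satisfy `Σ'_μ a_μ^{p−i}·ā_μ^{i} = 0`, then
`u(x) = Σ_μ a_μ x_μ` solves the `(p,i)`-submodel. -/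
theorem submodel_linear_solution {n : ℕ} (p i : ℕ) (hp : 2 ≤ p) (hi : i ≤ (p - 1) / 2)
    (a : Fin (n + 1) → ℂ)
    (ha : minkSum (fun μ => a μ ^ (p - i) * (starRingEnd ℂ) (a μ) ^ i) = 0) :
    SolvesSubmodel p i (fun x => ∑ μ, a μ * (x μ : ℂ)) :=
  submodel_linear_solution_general p i a ha
end

section
/- Fix integers p ≥ 2 and 0 ≤ i ≤ ⌊(p−1)/2⌋. Let a₀, a₁, …, aₙ ∈ ℂ satisfy Σ'_μ a_μ^{p−i} · ā_μ^{i} = 0, where ā_μ is the complex conjugate of a_μ, and let f : ℂ → ℂ be any holomorphic (entire) function. Then u(x₀,…,xₙ) := f(a₀x₀ + Σ_{j=1}^{n} a_j x_j) is a solution of the (p,i)-submodel. -/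
theorem iteratedDeriv_star {𝕜 F : Type*} [NontriviallyNormedField 𝕜] [StarRing 𝕜] [TrivialStar 𝕜]
    [NormedAddCommGroup F] [NormedSpace 𝕜 F] [StarAddMonoid F] [StarModule 𝕜 F]
    [ContinuousStar F] (m : ℕ) (f : 𝕜 → F) :
    iteratedDeriv m (fun y => star (f y)) = fun y => star (iteratedDeriv m f y) := by
  induction m with
  | zero => simp
  | succ m ih => simp only [iteratedDeriv_succ, ih, deriv.star']

section LineRestriction

variable {𝕜 𝕜' : Type*} [NontriviallyNormedField 𝕜] [NontriviallyNormedField 𝕜']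
  [NormedAlgebra 𝕜 𝕜']

theorem hasDerivAt_comp_add_smul {g : 𝕜' → 𝕜'} (c b : 𝕜') {t : 𝕜}
    (hg : DifferentiableAt 𝕜' g (c + t • b)) :
    HasDerivAt (fun s : 𝕜 => g (c + s • b)) (b * deriv g (c + t • b)) t := by
  have hline : HasDerivAt (fun s : 𝕜 => c + s • b) b t := by
    simpa using (hasDerivAt_id t).smul_const b |>.const_add c
  rw [mul_comm]
  exact hg.hasDerivAt.comp t hline

theorem iteratedDeriv_comp_add_smul {m : ℕ} {g : 𝕜' → 𝕜'} (hg : ContDiff 𝕜' m g) (c b : 𝕜')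
    (t : 𝕜) :
    iteratedDeriv m (fun s : 𝕜 => g (c + s • b)) t = b ^ m * iteratedDeriv m g (c + t • b) := by
  induction m generalizing g with
  | zero => simp
  | succ m ih =>
    obtain ⟨hg_diff, -, hg_deriv⟩ := contDiff_succ_iff_deriv (n := m).1 (by exact_mod_cast hg)
    have hderiv : deriv (fun s : 𝕜 => g (c + s • b)) = fun s => b * deriv g (c + s • b) :=
      funext fun s => (hasDerivAt_comp_add_smul c b (hg_diff _)).deriv
    rw [iteratedDeriv_succ', hderiv, ih (contDiff_const.mul hg_deriv), iteratedDeriv_const_mul_field,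
      iteratedDeriv_succ']
    ring

end LineRestriction

theorem sum_mul_update_eq {ι : Type*} [Fintype ι] [DecidableEq ι] (a : ι → ℂ) (x : ι → ℝ) (μ : ι)
    (t : ℝ) :
    ∑ ν, a ν * (Function.update x μ t ν : ℂ)
      = (∑ ν, a ν * (x ν : ℂ) - x μ • a μ) + t • a μ := by
  have hupd : (fun ν => a ν * (Function.update x μ t ν : ℂ))
      = Function.update (fun ν => a ν * (x ν : ℂ)) μ (t • a μ) := by
    funext ν
    rcases eq_or_ne ν μ with rfl | hν
    · simp [Complex.real_smul, mul_comm]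
    · simp [hν]
  rw [hupd, Finset.sum_update_of_mem (Finset.mem_univ μ),
    ← Finset.add_sum_erase _ _ (Finset.mem_univ μ)]
  simp only [Finset.sdiff_singleton_eq_erase, Complex.real_smul]
  ring

section Submodel

variable {n : ℕ}

theorem ipd_comp_linear (μ : Fin (n + 1)) {m : ℕ} {g : ℂ → ℂ} (hg : ContDiff ℂ m g)
    (a : Fin (n + 1) → ℂ) (x : Fin (n + 1) → ℝ) :
    ipd μ m (fun y => g (∑ ν, a ν * (y ν : ℂ))) x
      = a μ ^ m * iteratedDeriv m g (∑ ν, a ν * (x ν : ℂ)) := by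
  simp only [ipd, sum_mul_update_eq]
  rw [iteratedDeriv_comp_add_smul hg, sub_add_cancel]

theorem ipd_conj (μ : Fin (n + 1)) (m : ℕ) (u : (Fin (n + 1) → ℝ) → ℂ) (x : Fin (n + 1) → ℝ) :
    ipd μ m (fun y => (starRingEnd ℂ) (u y)) x = (starRingEnd ℂ) (ipd μ m u x) :=
  congrFun (iteratedDeriv_star m _) _

theorem minkSum_mul_const (A : Fin (n + 1) → ℂ) (c : ℂ) :
    minkSum (fun μ => A μ * c) = minkSum A * c := by
  simp only [minkSum, Finset.sum_mul, sub_mul]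

end Submodel

theorem submodel_holomorphic_of_linear_solution_general {n : ℕ} (p i : ℕ)
    (a : Fin (n + 1) → ℂ)
    (ha : minkSum (fun μ => a μ ^ (p - i) * (starRingEnd ℂ) (a μ) ^ i) = 0)
    (f : ℂ → ℂ) (hf : Differentiable ℂ f) :
    SolvesSubmodel p i (fun x => f (∑ μ, a μ * (x μ : ℂ))) := by
  intro k _ l _ x
  set S := ∑ μ, a μ * (x μ : ℂ)
  have hpow : ∀ μ, ipd μ (p - i) (fun y => f (∑ ν, a ν * (y ν : ℂ)) ^ k) x
      = a μ ^ (p - i) * iteratedDeriv (p - i) (fun z => f z ^ k) S :=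
    fun μ => ipd_comp_linear μ (hf.pow k).contDiff a x
  have hconj_pow : ∀ μ, ipd μ i (fun y => (starRingEnd ℂ) (f (∑ ν, a ν * (y ν : ℂ))) ^ l) x
      = (starRingEnd ℂ) (a μ ^ i * iteratedDeriv i (fun z => f z ^ l) S) := by
    intro μ
    simp only [← map_pow]
    rw [ipd_conj, ipd_comp_linear μ (g := fun z => f z ^ l) (hf.pow l).contDiff]
  calc minkSum _
      = minkSum (fun μ => a μ ^ (p - i) * (starRingEnd ℂ) (a μ) ^ i) *
          (iteratedDeriv (p - i) (fun z => f z ^ k) S *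
            (starRingEnd ℂ) (iteratedDeriv i (fun z => f z ^ l) S)) := by
        rw [← minkSum_mul_const]
        congr 1
        funext μ
        rw [hpow, hconj_pow, map_mul, map_pow]
        ring
    _ = 0 := by rw [ha, zero_mul]

/-- Exact solutions: if `a₀,…,aₙ ∈ ℂ` satisfy `Σ'_μ a_μ^{p−i}·ā_μ^{i} = 0` and
`f : ℂ → ℂ` is entire, then `u(x) = f(Σ_μ a_μ x_μ)` solves the `(p,i)`-submodel. -/
theorem submodel_holomorphic_of_linear_solution {n : ℕ} (p i : ℕ)
    (hp : 2 ≤ p) (hi : i ≤ (p - 1) / 2) (a : Fin (n + 1) → ℂ)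
    (ha : minkSum (fun μ => a μ ^ (p - i) * (starRingEnd ℂ) (a μ) ^ i) = 0)
    (f : ℂ → ℂ) (hf : Differentiable ℂ f) :
    SolvesSubmodel p i (fun x => f (∑ μ, a μ * (x μ : ℂ))) :=
  submodel_holomorphic_of_linear_solution_general p i a ha f hf
end
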